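/- Borel–Cantelli step of the lower bound: let μ ∈ EM(S,ς), fix k with 1/k < h_ς(μ) and ε ∈ (0, 1/k). Define D̃_{n,k} = {s ∈ Σ^{Λ_n} : K(s)/|Λ_n| ≤ h_ς(μ) − 1/k} and T_{n,k,ε} = {s ∈ Σ^{Λ_n} : μ([[s]] ∩ S) < 2^{−|Λ_n|(h_ς(μ) − 1/k + ε)}}. Then μ([[D̃_{n,k}]] ∩ [[T_{n,k,ε}]] ∩ S) ≤ 2^{−|Λ_n|ε + 1}, and hence Σ_n μ([[D̃_{n,k}]] ∩ [[T_{n,k,ε}]] ∩ S) < ∞, so by Borel–Cantelli, μ-almost every ω belongs to [[D̃_{n,k}]] ∩ [[T_{n,k,ε}]] ∩ S for only finitely many n. -/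

import Mathlib

open scoped BigOperators Classical
open MeasureTheory Filter

/-- Binary strings `{0,1}*`. -/
abbrev BStr := List Bool

/-- A set of strings is prefix-free. -/
def PrefixFree (D : Set BStr) : Prop :=
  ∀ p ∈ D, ∀ q ∈ D, p <+: q → p = q

/-- Complexity of `x` w.r.t. a partial machine `φ`, with value `∞` if no program. -/
noncomputable def KofE {α : Type*} (φ : BStr →. List α) (x : List α) : ℕ∞ :=
  ⨅ p ∈ {p : BStr | x ∈ φ p}, (p.length : ℕ∞)

/-- Finite-valued complexity (junk value `0` when no program exists). -/
noncomputable def Kof {α : Type*} (φ : BStr →. List α) (x : List α) : ℕ :=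
  (KofE φ x).toNat

/-- `φ` is an additively optimal partial recursive prefix function. -/
def AddOptimal {α : Type*} [Primcodable α] (φ : BStr →. List α) : Prop :=
  Partrec φ ∧ PrefixFree φ.Dom ∧
    ∀ ψ : BStr →. List α, Partrec ψ → PrefixFree ψ.Dom →
      ∃ c : ℕ, ∀ x : List α, KofE φ x ≤ KofE ψ x + (c : ℕ∞)

/-- The cube `Λ_n ⊂ ℤ^d` : all `g` with `|g i| < n`. -/
noncomputable def cubeZ (d n : ℕ) : Finset (Fin d → ℤ) :=
  Fintype.piFinset fun _ => Finset.Ioo (-(n : ℤ)) (n : ℤ)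

/-- The cube `Λ_n ⊂ ℤ₊^d` : all `g` with `g i < n`. -/
def cubeN (d n : ℕ) : Finset (Fin d → ℕ) :=
  Fintype.piFinset fun _ => Finset.range n

/-- Elements of the cube `Λ_n ⊂ ℤ^d`. -/
abbrev CubeZ (d n : ℕ) := {g : Fin d → ℤ // g ∈ cubeZ d n}

/-- Linearization of a pattern on `Λ_n` into a string, via a fixed enumeration. -/
noncomputable def lin {d n : ℕ} {A : Type*} (s : CubeZ d n → A) : List A :=
  List.ofFn (s ∘ (Fintype.equivFin (CubeZ d n)).symm)

/-- Prefix Kolmogorov complexity of a pattern on `Λ_n`. -/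
noncomputable def patK {A : Type*} (φ : BStr →. List A) {d n : ℕ}
    (s : CubeZ d n → A) : ℕ :=
  Kof φ (lin s)

/-- Shift action of `ℤ^d` on `Σ^{ℤ^d}`. -/
def shiftZ {d : ℕ} {A : Type*} (g : Fin d → ℤ) (ω : (Fin d → ℤ) → A) :
    (Fin d → ℤ) → A := fun h => ω (h + g)

/-- A subshift: a nonempty closed shift-invariant subset. -/
def IsSubshift {d : ℕ} {A : Type*} [TopologicalSpace A]
    (S : Set ((Fin d → ℤ) → A)) : Prop :=
  S.Nonempty ∧ IsClosed S ∧ ∀ g : Fin d → ℤ, shiftZ g '' S = S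

/-- Shift-invariance of a measure. -/
def ShiftInvariant {d : ℕ} {A : Type*} [MeasurableSpace A]
    (μ : Measure ((Fin d → ℤ) → A)) : Prop :=
  ∀ g : Fin d → ℤ, Measure.map (shiftZ g) μ = μ

/-- Ergodicity of the shift action. -/
def ErgodicShift {d : ℕ} {A : Type*} [MeasurableSpace A]
    (μ : Measure ((Fin d → ℤ) → A)) : Prop :=
  ShiftInvariant μ ∧
    ∀ B : Set ((Fin d → ℤ) → A), MeasurableSet B →
      (∀ g : Fin d → ℤ, shiftZ g ⁻¹' B = B) → μ B = 0 ∨ μ B = 1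

/-- The cylinder set of a pattern on `Λ_n`. -/
def cylZ {d n : ℕ} {A : Type*} (s : CubeZ d n → A) : Set ((Fin d → ℤ) → A) :=
  {ω | ∀ g : CubeZ d n, ω g.1 = s g}

/-- Restriction of a configuration to `Λ_n`. -/
def restr {d : ℕ} {A : Type*} (n : ℕ) (ω : (Fin d → ℤ) → A) : CubeZ d n → A :=
  fun g => ω g.1

/-- `φ(t) = -t log₂ t` (with `φ(0)=0`). -/
noncomputable def phi2 (t : ℝ) : ℝ := if t = 0 then 0 else -t * Real.logb 2 t

/-- Kolmogorov–Sinai entropy of the shift system `(S, μ)`, computed (via the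
Kolmogorov–Sinai generator theorem) from the cylinder partitions of the cubes. -/
noncomputable def KSentropy {d : ℕ} {A : Type*} [Fintype A] [MeasurableSpace A]
    (μ : Measure ((Fin d → ℤ) → A)) (S : Set ((Fin d → ℤ) → A)) : ℝ :=
  ⨅ n : ℕ, (∑ s : CubeZ d (n + 1) → A, phi2 ((μ (cylZ s ∩ S)).toReal)) /
      (cubeZ d (n + 1)).card

/-- Kolmogorov complexity density at scale `n`. -/
noncomputable def Kdens {A : Type*} (φ : BStr →. List A) {d : ℕ}
    (ω : (Fin d → ℤ) → A) (n : ℕ) : ℝ :=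
  (patK φ (restr n ω) : ℝ) / (cubeZ d n).card
/-- The set `[[D̃_{n,k}]] ∩ [[T_{n,k,ε}]] ∩ S` of the Borel–Cantelli step. -/
noncomputable def BadSet {A : Type*} [Fintype A] [MeasurableSpace A]
    (φ : BStr →. List A) {d : ℕ} (μ : Measure ((Fin d → ℤ) → A))
    (S : Set ((Fin d → ℤ) → A)) (k : ℕ) (ε : ℝ) (n : ℕ) :
    Set ((Fin d → ℤ) → A) :=
  {ω | (patK φ (restr n ω) : ℝ) / (cubeZ d n).card ≤ KSentropy μ S - 1 / k ∧
    (μ (cylZ (restr n ω) ∩ S)).toReal <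
      (2 : ℝ) ^ (-(((cubeZ d n).card : ℝ)) * (KSentropy μ S - 1 / k + ε))} ∩ S

/-!
Optimality against a total prefix machine makes every pattern the output of a program of
length exactly its complexity, and such shortest programs form a prefix-free set, so at most
`2 ^ x` patterns have complexity `≤ x`. The set `[[D̃_{n,k}]] ∩ [[T_{n,k,ε}]] ∩ S` is thus
covered by at most `2 ^ (|Λ_n| (h - 1/k))` cylinders of mass `< 2 ^ (-|Λ_n| (h - 1/k + ε))`,
so its measure is at most `2 ^ (-|Λ_n| ε) ≤ (2 ^ (-ε)) ^ n`: the series is dominated by a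
geometric one and Borel–Cantelli applies.
-/

lemma eq_of_replicate_append_false_prefix {a b : ℕ}
    (h : List.replicate a true ++ [false] <+: List.replicate b true ++ [false]) : a = b := by
  obtain ⟨t, ht⟩ := h
  simpa [List.idxOf_append] using congrArg (List.idxOf false) ht

lemma primrec_replicate_true : Primrec fun n : ℕ => List.replicate n true :=
  (Primrec.list_map Primrec.list_range (Primrec₂.const true)).of_eq fun n => by
    simp [List.map_const']

/-- Witness: the unary code `1ⁿ0 ↦ decode n`. -/
lemma exists_partrec_prefixFree_surjective (A : Type*) [Primcodable A] :
    ∃ ψ : BStr →. List A, Partrec ψ ∧ PrefixFree ψ.Dom ∧ ∀ x : List A, ∃ p, x ∈ ψ p := by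
  let IsCode : BStr → Prop := fun p => p = List.replicate (p.length - 1) true ++ [false]
  let g : BStr → Option (List A) := fun p =>
    if IsCode p then Encodable.decode (p.length - 1) else none
  have hlen : Primrec fun p : BStr => p.length - 1 := Primrec.pred.comp Primrec.list_length
  have hcode : PrimrecPred IsCode := Primrec.eq.comp Primrec.id
    (Primrec.list_append.comp (primrec_replicate_true.comp hlen) (Primrec.const [false]))
  have hg : Primrec g := Primrec.ite hcode (Primrec.decode.comp hlen) (Primrec.const none)
  have hdom : ∀ p, p ∈ PFun.Dom (fun p => (g p : Part (List A))) → IsCode p := by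
    intro p hp
    obtain ⟨y, hy⟩ := (PFun.mem_dom _ p).1 hp
    by_contra hcode
    simp [g, hcode] at hy
  refine ⟨fun p => (g p : Part (List A)), Computable.ofOption hg.to_comp, ?_, fun x => ?_⟩
  · intro p hp q hq hpq
    rw [hdom p hp, hdom q hq] at hpq ⊢
    rw [eq_of_replicate_append_false_prefix hpq]
  · refine ⟨List.replicate (Encodable.encode x) true ++ [false], ?_⟩
    simp [g, IsCode, Encodable.encodek]

lemma AddOptimal.KofE_ne_top {A : Type*} [Primcodable A] {φ : BStr →. List A}
    (hφ : AddOptimal φ) (x : List A) : KofE φ x ≠ ⊤ := by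
  obtain ⟨ψ, hψ, hψpf, hψsurj⟩ := exists_partrec_prefixFree_surjective A
  obtain ⟨c, hc⟩ := hφ.2.2 ψ hψ hψpf
  obtain ⟨p, hp⟩ := hψsurj x
  have hψx : KofE ψ x ≤ p.length := iInf₂_le p hp
  refine ne_top_of_le_ne_top (ENat.natCast_ne_top (p.length + c)) ?_
  push_cast
  exact (hc x).trans (add_le_add_left hψx _)

/-- Padding with `false` to length `m` is injective on a prefix-free set of strings of length
at most `m`. -/
lemma PrefixFree.card_le_two_pow {D : Set BStr} (hD : PrefixFree D) {T : Finset BStr}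
    (hTD : ↑T ⊆ D) {m : ℕ} (hTm : ∀ p ∈ T, p.length ≤ m) : T.card ≤ 2 ^ m := by
  have hpad : Set.InjOn (fun p : BStr => fun i : Fin m => p.getD i false) T := by
    intro p hp q hq hpq
    have prefix_of_le : ∀ {p q : BStr}, q ∈ T → p.length ≤ q.length →
        (∀ i : Fin m, p.getD i false = q.getD i false) → p <+: q := by
      intro p q hq hle h
      rw [List.prefix_iff_eq_take]
      refine List.ext_getElem (by simp; omega) fun i hi _ => ?_
      have : p.getD i false = q.getD i false := h ⟨i, by have := hTm q hq; omega⟩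
      rw [List.getD_eq_getElem _ _ hi, List.getD_eq_getElem _ _ (by omega)] at this
      rwa [List.getElem_take]
    rcases le_total p.length q.length with hle | hle
    · exact hD p (hTD hp) q (hTD hq) (prefix_of_le hq hle (congrFun hpq))
    · exact (hD q (hTD hq) p (hTD hp) (prefix_of_le hp hle (fun i => (congrFun hpq i).symm))).symm
  simpa using Finset.card_le_card_of_injOn _ (fun _ _ => Finset.mem_coe.2 (Finset.mem_univ _)) hpad

lemma exists_mem_length_eq_Kof {A : Type*} {φ : BStr →. List A} {x : List A}
    (hx : KofE φ x ≠ ⊤) : ∃ p, x ∈ φ p ∧ p.length = Kof φ x := by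
  have hKofE : KofE φ x = ⨅ p : {p : BStr | x ∈ φ p}, (p.1.length : ℕ∞) := iInf_subtype'
  cases isEmpty_or_nonempty {p : BStr | x ∈ φ p}
  · exact absurd (by rw [hKofE, iInf_of_empty]) hx
  obtain ⟨⟨p, hp⟩, hmin⟩ := ENat.exists_eq_iInf fun p : {p : BStr | x ∈ φ p} => (p.1.length : ℕ∞)
  exact ⟨p, hp, by simp [Kof, hKofE, ← hmin]⟩

/-- Shortest programs of distinct strings are distinct elements of the prefix-free domain. -/
lemma AddOptimal.card_Kof_le {A γ : Type*} [Primcodable A] [Fintype γ] {φ : BStr →. List A}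
    (hφ : AddOptimal φ) {f : γ → List A} (hf : Function.Injective f) (x : ℝ) :
    ((Finset.univ.filter fun s => (Kof φ (f s) : ℝ) ≤ x).card : ℝ) ≤ 2 ^ x := by
  set L := Finset.univ.filter fun s => (Kof φ (f s) : ℝ) ≤ x
  rcases lt_or_ge x 0 with hx | hx
  · have : L = ∅ := Finset.filter_false_of_mem fun s _ => by
      have : (0 : ℝ) ≤ Kof φ (f s) := Nat.cast_nonneg _
      linarith
    simp [this, Real.rpow_nonneg]
  choose prog hprog hlen using fun s => exists_mem_length_eq_Kof (hφ.KofE_ne_top (f s))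
  have hinj : Function.Injective prog := fun s t hst =>
    hf (Part.mem_unique (hprog s) (hst ▸ hprog t))
  have hL : L.card ≤ 2 ^ ⌊x⌋₊ := by
    rw [← Finset.card_image_of_injective L hinj]
    refine hφ.2.1.card_le_two_pow ?_ fun p hp => ?_
    · intro p hp
      obtain ⟨s, -, rfl⟩ := Finset.mem_image.1 hp
      exact Part.dom_iff_mem.2 ⟨_, hprog s⟩
    · obtain ⟨s, hs, rfl⟩ := Finset.mem_image.1 hp
      rw [hlen]
      exact Nat.le_floor (Finset.mem_filter.1 hs).2
  calc (L.card : ℝ) ≤ (2 : ℝ) ^ (⌊x⌋₊ : ℝ) := by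
        rw [Real.rpow_natCast]; exact_mod_cast hL
    _ ≤ 2 ^ x := Real.rpow_le_rpow_of_exponent_le one_le_two (Nat.floor_le hx)

lemma lin_injective {d n : ℕ} {A : Type*} : Function.Injective (lin (d := d) (n := n) (A := A)) :=
  fun _ _ h => (Fintype.equivFin (CubeZ d n)).symm.surjective.injective_comp_right
    (List.ofFn_injective h)

lemma card_cubeZ (d n : ℕ) : (cubeZ d n).card = (2 * n - 1) ^ d := by
  simp only [cubeZ, Fintype.card_piFinset, Int.card_Ioo, Finset.prod_const, Finset.card_univ,
    Fintype.card_fin]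
  congr 1
  omega

lemma card_cubeZ_pos (d : ℕ) {n : ℕ} (hn : 1 ≤ n) : 0 < (cubeZ d n).card := by
  rw [card_cubeZ]
  exact Nat.pow_pos (by omega)

lemma le_card_cubeZ {d : ℕ} (hd : 1 ≤ d) (n : ℕ) : n ≤ (cubeZ d n).card := by
  rw [card_cubeZ]
  calc n ≤ 2 * n - 1 := by omega
    _ ≤ (2 * n - 1) ^ d := Nat.le_self_pow (by omega) _

lemma measure_badSet_le {A : Type*} [Fintype A] [Primcodable A] [MeasurableSpace A] {d : ℕ}
    {φ : BStr →. List A} (hφ : AddOptimal φ) (S : Set ((Fin d → ℤ) → A))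
    (μ : Measure ((Fin d → ℤ) → A)) [IsFiniteMeasure μ] (k : ℕ) (ε : ℝ) {n : ℕ} (hn : 1 ≤ n) :
    (μ (BadSet φ μ S k ε n)).toReal ≤ 2 ^ (-((cubeZ d n).card : ℝ) * ε) := by
  set c : ℝ := ((cubeZ d n).card : ℝ)
  set h : ℝ := KSentropy μ S - 1 / k
  set B : ℝ := 2 ^ (-c * (h + ε))
  have hc : 0 < c := Nat.cast_pos.2 (card_cubeZ_pos d hn)
  set F := Finset.univ.filter fun s : CubeZ d n → A =>
    (patK φ s : ℝ) ≤ c * h ∧ (μ (cylZ s ∩ S)).toReal < B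
  have hcover : BadSet φ μ S k ε n ⊆ ⋃ s ∈ F, cylZ s ∩ S := by
    rintro ω ⟨⟨hK, hμ⟩, hωS⟩
    refine Set.mem_iUnion₂.2 ⟨restr n ω, ?_, fun _ => rfl, hωS⟩
    rw [div_le_iff₀ hc, mul_comm] at hK
    exact Finset.mem_filter.2 ⟨Finset.mem_univ _, hK, hμ⟩
  have hcard : (F.card : ℝ) ≤ 2 ^ (c * h) :=
    (Nat.cast_le.2 (Finset.card_le_card
      (Finset.monotone_filter_right _ fun _ _ => And.left))).trans
        (hφ.card_Kof_le lin_injective (c * h))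
  calc μ.real (BadSet φ μ S k ε n) ≤ μ.real (⋃ s ∈ F, cylZ s ∩ S) :=
        measureReal_mono hcover (measure_ne_top _ _)
    _ ≤ ∑ s ∈ F, μ.real (cylZ s ∩ S) := measureReal_biUnion_finset_le F _
    _ ≤ F.card * B := by
      simpa [measureReal_def] using
        Finset.sum_le_card_nsmul F _ B fun s hs => (Finset.mem_filter.1 hs).2.2.le
    _ ≤ 2 ^ (c * h) * B := by gcongr
    _ = 2 ^ (-c * ε) := by rw [← Real.rpow_add two_pos]; ring_nf

lemma measure_badSet_le_geometric {A : Type*} [Fintype A] [Primcodable A] [MeasurableSpace A]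
    {d : ℕ} (hd : 1 ≤ d) {φ : BStr →. List A} (hφ : AddOptimal φ) (S : Set ((Fin d → ℤ) → A))
    (μ : Measure ((Fin d → ℤ) → A)) [IsProbabilityMeasure μ] (k : ℕ) {ε : ℝ} (hε : 0 ≤ ε)
    (n : ℕ) : (μ (BadSet φ μ S k ε n)).toReal ≤ ((2 : ℝ) ^ (-ε)) ^ n := by
  rcases Nat.eq_zero_or_pos n with rfl | hn
  · rw [pow_zero]
    exact measureReal_le_one
  calc (μ (BadSet φ μ S k ε n)).toReal ≤ 2 ^ (-((cubeZ d n).card : ℝ) * ε) :=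
        measure_badSet_le hφ S μ k ε hn
    _ ≤ 2 ^ (-ε * n) := Real.rpow_le_rpow_of_exponent_le one_le_two
        (by nlinarith [(Nat.cast_le (α := ℝ)).2 (le_card_cubeZ hd n)])
    _ = ((2 : ℝ) ^ (-ε)) ^ n := by rw [Real.rpow_mul zero_le_two, Real.rpow_natCast]

lemma ENNReal.tsum_ne_top_of_summable_toReal {α : Type*} {f : α → ENNReal} (hf : ∀ a, f a ≠ ⊤)
    (hsum : Summable fun a => (f a).toReal) : ∑' a, f a ≠ ⊤ := by
  lift f to α → NNReal using hf
  exact ENNReal.tsum_coe_ne_top_iff_summable_coe.2 hsum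

theorem stmt_10_general {A : Type*} [Fintype A] [Primcodable A]
    [MeasurableSpace A]
    {d : ℕ} (hd : 1 ≤ d) (φ : BStr →. List A) (hφ : AddOptimal φ)
    (S : Set ((Fin d → ℤ) → A))
    (μ : Measure ((Fin d → ℤ) → A)) [IsProbabilityMeasure μ]
    (k : ℕ)
    (ε : ℝ) (hε : 0 < ε) :
    (∀ n : ℕ, 1 ≤ n → (μ (BadSet φ μ S k ε n)).toReal ≤
      (2 : ℝ) ^ (-(((cubeZ d n).card : ℝ)) * ε + 1)) ∧
    Summable (fun n => (μ (BadSet φ μ S k ε n)).toReal) ∧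
    ∀ᵐ ω ∂μ, ∀ᶠ n in Filter.atTop, ω ∉ BadSet φ μ S k ε n := by
  have hsumm : Summable fun n => (μ (BadSet φ μ S k ε n)).toReal :=
    .of_nonneg_of_le (fun _ => ENNReal.toReal_nonneg)
      (measure_badSet_le_geometric hd hφ S μ k hε.le)
      (summable_geometric_of_lt_one (by positivity)
        (Real.rpow_lt_one_of_one_lt_of_neg one_lt_two (neg_lt_zero.2 hε)))
  refine ⟨fun n hn => ?_, hsumm, ae_eventually_notMem
    (ENNReal.tsum_ne_top_of_summable_toReal (fun _ => measure_ne_top μ _) hsumm)⟩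
  exact (measure_badSet_le hφ S μ k ε hn).trans
    (Real.rpow_le_rpow_of_exponent_le one_le_two (le_add_of_nonneg_right zero_le_one))

/-- Borel–Cantelli step of the lower bound: `μ([[D̃_{n,k}]] ∩ [[T_{n,k,ε}]] ∩ S)
≤ 2^{-|Λ_n|ε+1}`, the series converges, and `μ`-a.e. `ω` lies in only finitely
many of these sets. -/
theorem stmt_10 {A : Type*} [Fintype A] [Nonempty A] [Primcodable A]
    [TopologicalSpace A] [DiscreteTopology A]
    [MeasurableSpace A] [MeasurableSingletonClass A]
    {d : ℕ} (hd : 1 ≤ d) (φ : BStr →. List A) (hφ : AddOptimal φ)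
    (S : Set ((Fin d → ℤ) → A)) (hS : IsSubshift S)
    (μ : Measure ((Fin d → ℤ) → A)) [IsProbabilityMeasure μ]
    (herg : ErgodicShift μ) (hμS : μ S = 1)
    (k : ℕ) (hk0 : 1 ≤ k) (hk : 1 / (k : ℝ) < KSentropy μ S)
    (ε : ℝ) (hε : 0 < ε) (hεk : ε < 1 / (k : ℝ)) :
    (∀ n : ℕ, 1 ≤ n → (μ (BadSet φ μ S k ε n)).toReal ≤
      (2 : ℝ) ^ (-(((cubeZ d n).card : ℝ)) * ε + 1)) ∧
    Summable (fun n => (μ (BadSet φ μ S k ε n)).toReal) ∧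
    ∀ᵐ ω ∂μ, ∀ᶠ n in Filter.atTop, ω ∉ BadSet φ μ S k ε n :=
  stmt_10_general hd φ hφ S μ k ε hε
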